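/- arXiv:2104.09724 — 2 statements merged into one kernel-verified Lean document; each statement's English description precedes it below -/
import Mathlib

section
/- If A is a torsion-free abelian group, then its profinite completion Â := lim_n A/nA (limit over all natural numbers n ordered by divisibility, with natural projections) is torsion-free. -/
/-- The subgroup `nA` of `n`-th multiples of an abelian group `A`. -/
def nMul (A : Type*) [AddCommGroup A] (n : ℕ) : AddSubgroup A where
  carrier := Set.range fun x : A => n • x
  add_mem' := by rintro _ _ ⟨a, rfl⟩ ⟨b, rfl⟩; exact ⟨a + b, by simp [smul_add]⟩
  zero_mem' := ⟨0, smul_zero n⟩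
  neg_mem' := by rintro _ ⟨a, rfl⟩; exact ⟨-a, by simp⟩

/-- The natural projection `A/kA → A/nA` for `n ∣ k`. -/
def projn (A : Type*) [AddCommGroup A] {n k : ℕ} (h : n ∣ k) :
    (A ⧸ nMul A k) →+ (A ⧸ nMul A n) :=
  QuotientAddGroup.map _ _ (AddMonoidHom.id A) (by
    rintro _ ⟨a, rfl⟩
    obtain ⟨c, rfl⟩ := h
    exact ⟨c • a, by simp [mul_smul]⟩)

/-- The map `A/nA → B/nB` induced by a homomorphism `f : A → B`. -/
def qmap {A B : Type*} [AddCommGroup A] [AddCommGroup B] (f : A →+ B) (n : ℕ) :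
    A ⧸ nMul A n →+ B ⧸ nMul B n :=
  QuotientAddGroup.map _ _ f (by
    rintro _ ⟨a, rfl⟩
    exact ⟨f a, by simp [map_nsmul]⟩)

/-- The profinite completion `lim_n A/nA` (over `n ≥ 1` ordered by divisibility) of an
abelian group `A`, realized as the subgroup of compatible families in `∏_n A/nA`. -/
def profComp (A : Type*) [AddCommGroup A] :
    AddSubgroup (∀ n : ℕ+, A ⧸ nMul A n) where
  carrier := { f | ∀ (n k : ℕ+) (h : (n : ℕ) ∣ (k : ℕ)), projn A h (f k) = f n }
  add_mem' := by intro f g hf hg n k h; simp only [Pi.add_apply, map_add, hf n k h, hg n k h]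
  zero_mem' := by intro n k h; simp
  neg_mem' := by intro f hf n k h; simp only [Pi.neg_apply, map_neg, hf n k h]

/-- The canonical map from `A` to its profinite completion. -/
def toProfComp (A : Type*) [AddCommGroup A] : A →+ profComp A where
  toFun a := ⟨fun _ => QuotientAddGroup.mk a, fun n k h => by
    simp [projn, QuotientAddGroup.map_mk]⟩
  map_zero' := rfl
  map_add' a b := by ext n; rfl

/-- If `A` is a torsion-free abelian group, then its profinite completion
`Â := lim_n A/nA` is torsion-free. -/
theorem stmt4 (A : Type*) [AddCommGroup A]
    (htf : ∀ (k : ℕ) (x : A), k ≠ 0 → k • x = 0 → x = 0) :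
    ∀ (k : ℕ) (x : profComp A), k ≠ 0 → k • x = 0 → x = 0 := by
  intro k x hk hkx
  ext n
  -- use the component at n * k
  have hkpos : 0 < k := Nat.pos_of_ne_zero hk
  set m : ℕ+ := n * ⟨k, hkpos⟩ with hm
  have hdvd : (n : ℕ) ∣ (m : ℕ) := ⟨k, rfl⟩
  have hcomp : projn A hdvd ((x : ∀ n : ℕ+, A ⧸ nMul A n) m)
      = (x : ∀ n : ℕ+, A ⧸ nMul A n) n := x.2 n m hdvd
  obtain ⟨a, ha⟩ := QuotientAddGroup.mk_surjective ((x : ∀ n : ℕ+, A ⧸ nMul A n) m)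
  -- k • (component at m) = 0
  have hzero : k • ((x : ∀ n : ℕ+, A ⧸ nMul A n) m) = 0 := by
    have := congrArg (fun y : profComp A => (y : ∀ n : ℕ+, A ⧸ nMul A n) m) hkx
    simpa using this
  rw [← ha, ← QuotientAddGroup.mk_nsmul] at hzero
  have hmem : k • a ∈ nMul A m := (QuotientAddGroup.eq_zero_iff _).mp hzero
  obtain ⟨b, hb⟩ := hmem
  -- (m : ℕ) = n * k, so (n*k) • b = k • a
  have hb' : k • ((n : ℕ) • b) = k • a := by
    rw [← mul_smul, mul_comm, ← hb]; rfl
  have hab : a = (n : ℕ) • b := by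
    exact sub_eq_zero.mp (htf k (a - (n : ℕ) • b) hk (by rw [smul_sub, hb', sub_self]))
  have : (x : ∀ n : ℕ+, A ⧸ nMul A n) n = 0 := by
    rw [← hcomp, ← ha]
    have : projn A hdvd (QuotientAddGroup.mk a) = QuotientAddGroup.mk a := rfl
    rw [this, QuotientAddGroup.eq_zero_iff]
    exact ⟨b, hab.symm⟩
  simpa using this
end

section
/- If A is a torsion-free abelian group and p a prime, then the pro-p completion Â^p := lim_m A/p^m A is a torsion-free abelian group. -/
/-- The pro-`p` completion `lim_m A/p^m A` of an abelian group `A`, realized as the subgroup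
of compatible families in `∏_m A/p^m A`. -/
def pComp (A : Type*) [AddCommGroup A] (p : ℕ) :
    AddSubgroup (∀ m : ℕ, A ⧸ nMul A (p ^ m)) where
  carrier := { f | ∀ m : ℕ, projn A (pow_dvd_pow p (Nat.le_succ m)) (f (m + 1)) = f m }
  add_mem' := by intro f g hf hg m; simp only [Pi.add_apply, map_add, hf m, hg m]
  zero_mem' := by intro m; simp
  neg_mem' := by intro f hf m; simp only [Pi.neg_apply, map_neg, hf m]

/-- The canonical map from `A` to its pro-`p` completion. -/
def toPComp (A : Type*) [AddCommGroup A] (p : ℕ) : A →+ pComp A p where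
  toFun a := ⟨fun _ => QuotientAddGroup.mk a, fun m => by
    simp [projn, QuotientAddGroup.map_mk]⟩
  map_zero' := rfl
  map_add' a b := by ext m; rfl

lemma projn_mk (A : Type*) [AddCommGroup A] {n k : ℕ} (h : n ∣ k) (a : A) :
    projn A h (QuotientAddGroup.mk a) = QuotientAddGroup.mk a := rfl

lemma mk_nsmul (A : Type*) [AddCommGroup A] (n k : ℕ) (a : A) :
    (k • (QuotientAddGroup.mk a : A ⧸ nMul A n)) = QuotientAddGroup.mk (k • a) :=
  (map_nsmul (QuotientAddGroup.mk' (nMul A n)) k a).symm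

lemma nsmul_self_quot (A : Type*) [AddCommGroup A] (n : ℕ) (y : A ⧸ nMul A n) :
    n • y = 0 := by
  induction y using QuotientAddGroup.induction_on with
  | H z =>
    rw [mk_nsmul]
    exact (QuotientAddGroup.eq_zero_iff _).mpr ⟨z, rfl⟩

lemma coprime_smul_eq_zero (A : Type*) [AddCommGroup A] {n s : ℕ}
    (hc : Nat.Coprime s n) (y : A ⧸ nMul A n) (h : s • y = 0) : y = 0 := by
  have hb := Nat.gcd_eq_gcd_ab s n
  rw [hc] at hb
  calc y = ((1 : ℤ)) • y := (one_smul ℤ y).symm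
    _ = ((s : ℤ) * Nat.gcdA s n + (n : ℤ) * Nat.gcdB s n) • y := by rw [← hb]; norm_num
    _ = Nat.gcdA s n • ((s : ℤ) • y) + Nat.gcdB s n • ((n : ℤ) • y) := by
        rw [add_smul, mul_comm, mul_comm (n : ℤ), mul_smul, mul_smul]
    _ = 0 := by
        rw [natCast_zsmul, natCast_zsmul, h, nsmul_self_quot, smul_zero, smul_zero, add_zero]
lemma projn_comp (A : Type*) [AddCommGroup A] {n k l : ℕ} (h1 : n ∣ k) (h2 : k ∣ l)
    (y : A ⧸ nMul A l) : projn A h1 (projn A h2 y) = projn A (dvd_trans h1 h2) y := by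
  induction y using QuotientAddGroup.induction_on with
  | H z => rfl

lemma proj_iter (A : Type*) [AddCommGroup A] (p : ℕ) (x : pComp A p) (m : ℕ) :
    ∀ j : ℕ, projn A (pow_dvd_pow p (Nat.le_add_right m j)) (x.1 (m + j)) = x.1 m := by
  intro j
  induction j with
  | zero =>
    obtain ⟨a, ha⟩ := QuotientAddGroup.mk_surjective (x.1 (m + 0))
    rw [← ha, projn_mk]
    exact ha
  | succ j ih =>
    have e := projn_comp A (pow_dvd_pow p (Nat.le_add_right m j))
      (pow_dvd_pow p (Nat.le_succ (m + j))) (x.1 (m + j + 1))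
    rw [x.2 (m + j), ih] at e
    exact e.symm

/-- If `A` is a torsion-free abelian group and `p` a prime, then the pro-`p`
completion `Â^p := lim_m A/p^m A` is a torsion-free abelian group. -/
theorem stmt5 (A : Type*) [AddCommGroup A]
    (htf : ∀ (k : ℕ) (x : A), k ≠ 0 → k • x = 0 → x = 0)
    (p : ℕ) (hp : p.Prime) :
    ∀ (k : ℕ) (x : pComp A p), k ≠ 0 → k • x = 0 → x = 0 := by
  intro k x hk hkx
  set r := k.factorization p with hr
  set s := k / p ^ r with hs
  have hks : p ^ r * s = k := Nat.ordProj_mul_ordCompl_eq_self k p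
  have hps : ¬ p ∣ s := Nat.not_dvd_ordCompl hp hk
  have hcoe : ∀ m, k • x.1 m = 0 := by
    intro m
    have h0 : ((k • x : pComp A p) : ∀ m : ℕ, A ⧸ nMul A (p ^ m)) = 0 := by
      rw [hkx]; rfl
    have h1 : ((k • x : pComp A p) : ∀ m : ℕ, A ⧸ nMul A (p ^ m)) = k • (x : ∀ m : ℕ, A ⧸ nMul A (p ^ m)) :=
      map_nsmul (pComp A p).subtype k x
    rw [h1] at h0
    exact congrFun h0 m
  have hpr : ∀ m, (p ^ r) • x.1 m = 0 := by
    intro m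
    have hco : Nat.Coprime s (p ^ m) :=
      Nat.Coprime.pow_right m ((hp.coprime_iff_not_dvd.mpr hps).symm)
    apply coprime_smul_eq_zero A hco
    rw [smul_smul, mul_comm, hks]
    exact hcoe m
  have hz : ∀ m, x.1 m = 0 := by
    intro m
    obtain ⟨a, ha⟩ := QuotientAddGroup.mk_surjective (x.1 (m + r))
    have h2 : (QuotientAddGroup.mk (p ^ r • a) : A ⧸ nMul A (p ^ (m + r))) = 0 := by
      rw [← mk_nsmul, ha]
      exact hpr (m + r)
    obtain ⟨b, hb⟩ := (QuotientAddGroup.eq_zero_iff _).mp h2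
    have hab : p ^ r • (a - p ^ m • b) = 0 := by
      rw [smul_sub, smul_smul, ← pow_add, add_comm r m, show p ^ (m + r) • b = p ^ r • a from hb, sub_self]
    have hab' : a - p ^ m • b = 0 :=
      htf (p ^ r) _ (pow_ne_zero r hp.pos.ne') hab
    have ha0 : (QuotientAddGroup.mk a : A ⧸ nMul A (p ^ m)) = 0 :=
      (QuotientAddGroup.eq_zero_iff _).mpr ⟨b, (sub_eq_zero.mp hab').symm⟩
    calc x.1 m = projn A (pow_dvd_pow p (Nat.le_add_right m r)) (x.1 (m + r)) :=
          (proj_iter A p x m r).symm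
      _ = projn A (pow_dvd_pow p (Nat.le_add_right m r)) (QuotientAddGroup.mk a) := by rw [ha]
      _ = QuotientAddGroup.mk a := projn_mk A _ a
      _ = 0 := ha0
  exact Subtype.ext (funext hz)
end
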